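/- For a prime power q, Δ(1,b) = 0 for all integers b with 1 ≤ b ≤ q-1, and consequently for any b ∈ Z_+, writing b = (q-1)σ + β with 0 < β ≤ q-1, one has Δ(1,b) = ∑_{i=0}^{σ-1} S_1(b - ((q-1) - 1 + i(q-1))), i.e., Δ(1,b) = ∑_{i=0}^{σ-1} S_1(b + 2 - (i+1)(q-1)). -/

import Mathlib

/-!
Over `F = 𝔽_q`, Frobenius gives `(t + η)^q = t^q + η`, hence the partial fraction identity
`(t + η)^(q-1) / (t - t^q) = 1 / (t - t^q) - 1 / (t + η)`. Since `∑_η (t + η)^(q-1) = -1`,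
summing it over `η` yields `S₁(1) = 1 / (t - t^q)`, and then
`Δ(1, b) = S₁(1) · ∑_η (t + η)^(q-1-b)`. For `1 ≤ b ≤ q - 1` this is a power sum of degree
below `q - 1`, which vanishes; for `b ≥ q - 1` it is `S₁(1) S₁(b - (q-1)) = Δ(1, b - (q-1)) +
S₁(b - q + 2)`, and iterating this gives the sum formula.
-/

open Finset

namespace FiniteField

variable {K : Type*} [Field K] [Fintype K]

theorem sum_pow_card_sub_one : ∑ x : K, x ^ (Fintype.card K - 1) = -1 := by
  classical
  have hq : 1 < Fintype.card K := Fintype.one_lt_card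
  calc ∑ x : K, x ^ (Fintype.card K - 1) = ∑ x : K, (1 - if x = 0 then 1 else 0) :=
        sum_congr rfl fun x _ => by
          split_ifs with hx
          · rw [hx, zero_pow (by omega), sub_self]
          · rw [sub_zero, pow_card_sub_one_eq_one x hx]
    _ = -1 := by simp

open Polynomial in
/-- Both sides have degree below `q` and agree on `K`, by translation invariance of power sums. -/
theorem sum_X_add_C_pow {m : ℕ} (hm : m < Fintype.card K) :
    ∑ η : K, (X + C η) ^ m = C (∑ η : K, η ^ m) := by
  refine eq_of_natDegree_lt_card_of_eval_eq _ _ (f := id) Function.injective_id (fun x => ?_) ?_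
  · simp only [eval_finsetSum, eval_pow, eval_add, eval_X, eval_C, id]
    exact Fintype.sum_equiv (Equiv.addLeft x) _ _ fun _ => rfl
  · rw [natDegree_C, max_eq_left (Nat.zero_le _)]
    refine lt_of_le_of_lt (natDegree_sum_le_of_forall_le _ _ fun η _ => ?_) hm
    exact (natDegree_pow_le_of_le m (natDegree_X_add_C η).le).trans (by simp)

open Polynomial in
theorem X_add_C_pow_card (η : K) : (X + C η) ^ Fintype.card K = X ^ Fintype.card K + C η := by
  rw [← expand_card]
  simp

end FiniteField

noncomputable section

namespace RatFunc

variable {F : Type*} [Field F]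

theorem algebraMap_X_add_C (η : F) :
    algebraMap (Polynomial F) (RatFunc F) (Polynomial.X + Polynomial.C η) = X + C η := by
  rw [map_add, algebraMap_X, algebraMap_C]

theorem X_add_C_ne_zero (η : F) : (X + C η : RatFunc F) ≠ 0 := by
  rw [← algebraMap_X_add_C]
  exact algebraMap_ne_zero (Polynomial.X_add_C_ne_zero η)

variable (F) [Fintype F]

/-- The power sum `S₁(k) = ∑_{θ ∈ F} (t + θ)⁻ᵏ`; `deltaInvPowSum F a b` is `Δ(a, b)`. -/
def invPowSum (k : ℕ) : RatFunc F := ∑ θ : F, ((X + C θ) ^ k)⁻¹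

def deltaInvPowSum (a b : ℕ) : RatFunc F := invPowSum F a * invPowSum F b - invPowSum F (a + b)

variable {F}

theorem X_sub_X_pow_card_ne_zero : (X - X ^ Fintype.card F : RatFunc F) ≠ 0 := by
  rw [← neg_ne_zero, neg_sub, ← algebraMap_X, ← map_pow, ← map_sub]
  exact algebraMap_ne_zero (FiniteField.X_pow_card_sub_X_ne_zero F Fintype.one_lt_card)

theorem X_add_C_pow_card (η : F) :
    (X + C η : RatFunc F) ^ Fintype.card F = X ^ Fintype.card F + C η := by
  rw [← algebraMap_X_add_C, ← map_pow, FiniteField.X_add_C_pow_card, map_add, map_pow,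
    algebraMap_X, algebraMap_C]

theorem sum_X_add_C_pow {m : ℕ} (hm : m < Fintype.card F) :
    ∑ η : F, (X + C η : RatFunc F) ^ m = C (∑ η : F, η ^ m) := by
  simp_rw [← algebraMap_X_add_C, ← map_pow, ← map_sum, FiniteField.sum_X_add_C_pow hm,
    algebraMap_C]

theorem X_add_C_pow_card_sub_one_mul_inv (η : F) :
    (X + C η) ^ (Fintype.card F - 1) * (X - X ^ Fintype.card F)⁻¹
      = (X - X ^ Fintype.card F)⁻¹ - (X + C η)⁻¹ := by
  have hpow : (X + C η) ^ (Fintype.card F - 1) * (X + C η) = X ^ Fintype.card F + C η := by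
    rw [← pow_succ, Nat.sub_add_cancel Fintype.card_pos, X_add_C_pow_card]
  have := X_add_C_ne_zero η
  have := X_sub_X_pow_card_ne_zero (F := F)
  field_simp
  linear_combination hpow

theorem invPowSum_one : invPowSum F 1 = (X - X ^ Fintype.card F)⁻¹ := by
  have hsum := sum_congr rfl fun (η : F) (_ : η ∈ univ) => X_add_C_pow_card_sub_one_mul_inv η
  rw [← sum_mul, sum_X_add_C_pow (Nat.sub_lt Fintype.card_pos one_pos),
    FiniteField.sum_pow_card_sub_one, sum_sub_distrib] at hsum
  rw [sum_const, card_univ, ← Nat.cast_smul_eq_nsmul F, Nat.cast_card_eq_zero, zero_smul,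
    zero_sub, map_neg, map_one, neg_one_mul, neg_inj] at hsum
  simp_rw [invPowSum, pow_one, hsum]

theorem deltaInvPowSum_one (b : ℕ) :
    deltaInvPowSum F 1 b
      = invPowSum F 1 * ∑ η : F, (X + C η) ^ (Fintype.card F - 1) * ((X + C η) ^ b)⁻¹ := by
  rw [deltaInvPowSum, mul_sum, invPowSum_one, invPowSum, invPowSum, mul_sum, ← sum_sub_distrib]
  refine sum_congr rfl fun η _ => ?_
  rw [pow_add, pow_one, mul_inv, ← mul_assoc, mul_comm _ (_ ^ (_ - 1)),
    X_add_C_pow_card_sub_one_mul_inv]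
  ring

theorem deltaInvPowSum_one_eq_zero {b : ℕ} (hb₀ : 1 ≤ b) (hb : b ≤ Fintype.card F - 1) :
    deltaInvPowSum F 1 b = 0 := by
  rw [deltaInvPowSum_one, sum_congr rfl fun η _ => (pow_sub₀ _ (X_add_C_ne_zero η) hb).symm,
    sum_X_add_C_pow (by omega), FiniteField.sum_pow_lt_card_sub_one F _ (by omega), map_zero,
    mul_zero]

theorem deltaInvPowSum_one_of_card_sub_one_le {b : ℕ} (hb : Fintype.card F - 1 ≤ b) :
    deltaInvPowSum F 1 b = invPowSum F 1 * invPowSum F (b - (Fintype.card F - 1)) := by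
  rw [deltaInvPowSum_one, invPowSum]
  refine congrArg _ (sum_congr rfl fun η _ => ?_)
  rw [pow_sub₀ _ (X_add_C_ne_zero η) hb, mul_inv, inv_inv, mul_comm]

theorem deltaInvPowSum_one_eq_sum (σ : ℕ) {β : ℕ} (hβ₀ : 1 ≤ β) (hβ : β ≤ Fintype.card F - 1) :
    deltaInvPowSum F 1 ((Fintype.card F - 1) * σ + β)
      = ∑ i ∈ range σ, invPowSum F ((Fintype.card F - 1) * i + β + 1) := by
  induction σ with
  | zero => simpa using deltaInvPowSum_one_eq_zero hβ₀ hβ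
  | succ σ ih =>
    have hb : (Fintype.card F - 1) * (σ + 1) + β - (Fintype.card F - 1)
        = (Fintype.card F - 1) * σ + β := by
      rw [mul_add_one]; omega
    rw [deltaInvPowSum_one_of_card_sub_one_le (by rw [mul_add_one]; omega), hb,
      sum_range_succ, ← ih, deltaInvPowSum, add_comm 1]
    ring

end RatFunc

end

theorem stmt_9_general (q : ℕ)
    {F : Type} [Field F] [Fintype F] (hF : Fintype.card F = q)
    (S1 : ℕ → RatFunc F)
    (hS1 : ∀ k, S1 k = ∑ θ : F, ((RatFunc.X + RatFunc.C θ) ^ k)⁻¹)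
    (Δ : ℕ → ℕ → RatFunc F)
    (hΔ : ∀ a b, Δ a b = S1 a * S1 b - S1 (a + b)) :
    (∀ b, 1 ≤ b → b ≤ q - 1 → Δ 1 b = 0) ∧
    (∀ b σ β, b = (q - 1) * σ + β → 0 < β → β ≤ q - 1 →
      Δ 1 b = ∑ i ∈ Finset.range σ, S1 (b + 1 - (i + 1) * (q - 1))) := by
  obtain rfl : S1 = RatFunc.invPowSum F := funext hS1
  obtain rfl : Δ = RatFunc.deltaInvPowSum F := funext₂ hΔ
  subst hF
  refine ⟨fun b hb₀ hb => RatFunc.deltaInvPowSum_one_eq_zero hb₀ hb, ?_⟩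
  rintro b σ β rfl hβ₀ hβ
  rw [RatFunc.deltaInvPowSum_one_eq_sum σ hβ₀ hβ, ← sum_range_reflect]
  refine sum_congr rfl fun i hi => congrArg _ ?_
  obtain ⟨k, rfl⟩ := Nat.exists_eq_add_of_lt (mem_range.mp hi)
  have hsplit : (Fintype.card F - 1) * (i + k + 1)
      = (Fintype.card F - 1) * k + (i + 1) * (Fintype.card F - 1) := by ring
  rw [hsplit, show i + k + 1 - 1 - i = k by omega]
  omega

/-- `Δ(1,b) = 0` for `1 ≤ b ≤ q-1`, and for `b = (q-1)σ + β` with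
`0 < β ≤ q-1`, `Δ(1,b) = ∑_{i=0}^{σ-1} S_1(b + 1 - (i+1)(q-1))`. -/
theorem stmt_9 (p s q : ℕ) (hp : p.Prime) (hs : 0 < s) (hq : q = p ^ s)
    {F : Type} [Field F] [Fintype F] (hF : Fintype.card F = q)
    (S1 : ℕ → RatFunc F)
    (hS1 : ∀ k, S1 k = ∑ θ : F, ((RatFunc.X + RatFunc.C θ) ^ k)⁻¹)
    (Δ : ℕ → ℕ → RatFunc F)
    (hΔ : ∀ a b, Δ a b = S1 a * S1 b - S1 (a + b)) :
    (∀ b, 1 ≤ b → b ≤ q - 1 → Δ 1 b = 0) ∧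
    (∀ b σ β, b = (q - 1) * σ + β → 0 < β → β ≤ q - 1 →
      Δ 1 b = ∑ i ∈ Finset.range σ, S1 (b + 1 - (i + 1) * (q - 1))) :=
  stmt_9_general q hF S1 hS1 Δ hΔ
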